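/- Let α₁ ∈ (0,1), c > 0, λ = 2 + 2α₁, η ∈ (0, c²/α₁), and γ_η = log( 1 + η/2 + √((1 + η/2)² − 1) ). For every θ ∈ ℂ with |Im θ| < γ_η, setting φ(θ) = λ + c² − 2α₁ cos θ and K(θ) = (φ(θ) + (φ(θ)² − 4)^{1/2})/2 with the principal branch of the complex square root, one has: (a) |cos θ| < 1 + η/2; (b) Re(φ(θ)) ≥ 2 + (c² − η·α₁) > 2; (c) |φ(θ)² − 4| > 4(c² − η·α₁); and (d) |K(θ)| > 1. -/

import Mathlib

/-!
Since `‖cos θ‖ ≤ cosh (Im θ)` and `γ_η = arcosh (1 + η/2)`, the strip condition gives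
`‖cos θ‖ < 1 + η/2`, hence `Re φ > 2 + d` with `d = c² − ηα₁ > 0`. Then
`‖φ² − 4‖ = ‖φ − 2‖ ‖φ + 2‖ > 4d`, and, as the principal square root has nonnegative real
part, `Re (φ + (φ² − 4)^{1/2}) > 2`, so `‖K‖ > 1`.
-/

/-- `K(θ) = (φ(θ) + (φ(θ)² − 4)^{1/2})/2` with `φ(θ) = λ + c² − 2α₁ cos θ`,
complex cosine and principal branch of the complex square root. -/
noncomputable def Kc (α₁ c : ℝ) (θ : ℂ) : ℂ :=
  (((2 + 2 * α₁ + c ^ 2 : ℂ) - 2 * (α₁ : ℂ) * Complex.cos θ) +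
    ((((2 + 2 * α₁ + c ^ 2 : ℂ) - 2 * (α₁ : ℂ) * Complex.cos θ) ^ 2 - 4) ^ (1 / 2 : ℂ))) / 2

namespace Complex

lemma re_cpow_one_half_nonneg (z : ℂ) : 0 ≤ (z ^ (1 / 2 : ℂ)).re := by
  rw [one_div, cpow_inv_two_re]
  exact Real.sqrt_nonneg _

lemma norm_cos_le_cosh_im (z : ℂ) : ‖cos z‖ ≤ Real.cosh z.im := by
  calc ‖cos z‖ = ‖exp (z * I) + exp (-z * I)‖ / 2 := by simp [cos]
    _ ≤ (‖exp (z * I)‖ + ‖exp (-z * I)‖) / 2 := by gcongr; exact norm_add_le _ _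
    _ = Real.cosh z.im := by simp [norm_exp, Real.cosh_eq, add_comm]

lemma norm_cos_lt_of_abs_im_lt_arcosh {t : ℝ} (ht : 1 ≤ t) {z : ℂ}
    (hz : |z.im| < Real.arcosh t) : ‖cos z‖ < t := by
  calc ‖cos z‖ ≤ Real.cosh z.im := norm_cos_le_cosh_im z
    _ < Real.cosh (Real.arcosh t) := by
      rwa [Real.cosh_lt_cosh, abs_of_nonneg (Real.arcosh_nonneg ht)]
    _ = t := Real.cosh_arcosh ht

lemma lt_re_sub_mul_cos {a α t : ℝ} (hα : 0 < α) {z : ℂ} (hz : ‖cos z‖ < t) :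
    a - 2 * α * t < ((a : ℂ) - 2 * α * cos z).re := by
  have hre : (cos z).re < t := (re_le_norm _).trans_lt hz
  simp only [sub_re, ofReal_re, mul_re, mul_im, re_ofNat, im_ofNat, ofReal_im]
  nlinarith

lemma mul_lt_norm_sq_sub_four {w : ℂ} {d : ℝ} (hd : 0 ≤ d) (hw : 2 + d < w.re) : 4 * d < ‖w ^ 2 - 4‖ := by
  have hsub : d < ‖w - 2‖ := by
    refine lt_of_lt_of_le ?_ (re_le_norm _)
    simp only [sub_re, re_ofNat]
    linarith
  have hadd : 4 < ‖w + 2‖ := by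
    refine lt_of_lt_of_le ?_ (re_le_norm _)
    simp only [add_re, re_ofNat]
    linarith
  rw [show w ^ 2 - 4 = (w - 2) * (w + 2) by ring, norm_mul]
  nlinarith [norm_nonneg (w - 2)]

lemma one_lt_norm_add_cpow_one_half_div_two {w : ℂ} (hw : 2 < w.re) (z : ℂ) :
    1 < ‖(w + z ^ (1 / 2 : ℂ)) / 2‖ := by
  have hre : 2 < (w + z ^ (1 / 2 : ℂ)).re := by
    rw [add_re]
    linarith [re_cpow_one_half_nonneg z]
  rw [norm_div, norm_ofNat, lt_div_iff₀ two_pos, one_mul]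
  exact hre.trans_le (re_le_norm _)

end Complex

open Complex in
theorem stmt16_general (α₁ c η : ℝ) (hα : α₁ ∈ Set.Ioo (0 : ℝ) 1)
    (hη : η ∈ Set.Ioo (0 : ℝ) (c ^ 2 / α₁)) (θ : ℂ)
    (hθ : |θ.im| < Real.log (1 + η / 2 + Real.sqrt ((1 + η / 2) ^ 2 - 1))) :
    ‖Complex.cos θ‖ < 1 + η / 2 ∧
      (2 + (c ^ 2 - η * α₁) ≤
          ((2 + 2 * α₁ + c ^ 2 : ℂ) - 2 * (α₁ : ℂ) * Complex.cos θ).re ∧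
        (2 : ℝ) < 2 + (c ^ 2 - η * α₁)) ∧
      4 * (c ^ 2 - η * α₁) <
        ‖((2 + 2 * α₁ + c ^ 2 : ℂ) - 2 * (α₁ : ℂ) * Complex.cos θ) ^ 2 - 4‖ ∧
      1 < ‖Kc α₁ c θ‖ := by
  obtain ⟨hα₁, -⟩ := hα
  obtain ⟨hη₀, hηc⟩ := hη
  have hcos : ‖cos θ‖ < 1 + η / 2 :=
    norm_cos_lt_of_abs_im_lt_arcosh (by linarith) hθ
  have hgap : 0 < c ^ 2 - η * α₁ := by
    have := (lt_div_iff₀ hα₁).mp hηc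
    linarith
  have hre : 2 + (c ^ 2 - η * α₁) <
      ((2 + 2 * α₁ + c ^ 2 : ℂ) - 2 * (α₁ : ℂ) * cos θ).re := by
    have := lt_re_sub_mul_cos (a := 2 + 2 * α₁ + c ^ 2) hα₁ hcos
    push_cast at this
    linarith
  refine ⟨hcos, ⟨hre.le, by linarith⟩, mul_lt_norm_sq_sub_four hgap.le hre, ?_⟩
  exact one_lt_norm_add_cpow_one_half_div_two (by linarith) _

/-- Bounds on `cos θ`, `φ(θ)`, `φ(θ)² − 4` and `K(θ)` in the strip
`|Im θ| < γ_η = log(1 + η/2 + √((1+η/2)² − 1))`. -/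
theorem stmt16 (α₁ c η : ℝ) (hα : α₁ ∈ Set.Ioo (0 : ℝ) 1) (hc : 0 < c)
    (hη : η ∈ Set.Ioo (0 : ℝ) (c ^ 2 / α₁)) (θ : ℂ)
    (hθ : |θ.im| < Real.log (1 + η / 2 + Real.sqrt ((1 + η / 2) ^ 2 - 1))) :
    ‖Complex.cos θ‖ < 1 + η / 2 ∧
      (2 + (c ^ 2 - η * α₁) ≤
          ((2 + 2 * α₁ + c ^ 2 : ℂ) - 2 * (α₁ : ℂ) * Complex.cos θ).re ∧
        (2 : ℝ) < 2 + (c ^ 2 - η * α₁)) ∧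
      4 * (c ^ 2 - η * α₁) <
        ‖((2 + 2 * α₁ + c ^ 2 : ℂ) - 2 * (α₁ : ℂ) * Complex.cos θ) ^ 2 - 4‖ ∧
      1 < ‖Kc α₁ c θ‖ :=
  stmt16_general α₁ c η hα hη θ hθ
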